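/- arXiv:2510.23609 — 3 statements merged into one kernel-verified Lean document; each statement's English description precedes it below -/
import Mathlib

section
/- Johnson–Lindenstrauss Lemma: Let 0 < ε < 1, let N, k be positive natural numbers, and let x_1, …, x_k be points of the Euclidean space ℝ^N. Then for every natural number n with (n : ℝ) > 8 · log k / ε², there exists a linear map L : ℝ^N → ℝ^n such that for all indices i, j one has (1 − ε)·‖x_i − x_j‖² ≤ ‖L x_i − L x_j‖² ≤ (1 + ε)·‖x_i − x_j‖². -/
open MeasureTheory ProbabilityTheory Real
open scoped ENNReal NNReal

noncomputable section JLAux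

namespace JLAux

/-- The standard Gaussian measure on `ℝ`. -/
def γ : Measure ℝ := gaussianReal 0 1

instance : IsProbabilityMeasure γ := by unfold γ; infer_instance

/-- Type synonym for `ℝ` carrying the standard Gaussian as its volume. -/
def GR : Type := ℝ

instance : MeasurableSpace GR := inferInstanceAs (MeasurableSpace ℝ)
instance : MeasureSpace GR := { volume := γ }
instance : IsProbabilityMeasure (volume : Measure GR) :=
  inferInstanceAs (IsProbabilityMeasure γ)

def GR.real (x : GR) : ℝ := x

lemma measurable_GR_real : Measurable GR.real := measurable_id

lemma γ_eq : γ = volume.withDensity fun x => ((gaussianPDFReal 0 1 x).toNNReal : ℝ≥0∞) := by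
  unfold γ
  rw [gaussianReal_of_var_ne_zero 0 one_ne_zero]
  rfl

lemma integral_γ {E : Type*} [NormedAddCommGroup E] [NormedSpace ℝ E] (g : ℝ → E) :
    ∫ x, g x ∂γ = ∫ x, gaussianPDFReal 0 1 x • g x := by
  rw [γ_eq, integral_withDensity_eq_integral_smul
    (measurable_gaussianPDFReal 0 1).real_toNNReal g]
  congr 1 with x
  rw [NNReal.smul_def, Real.coe_toNNReal _ (gaussianPDFReal_nonneg 0 1 x)]

lemma integrable_γ_iff {E : Type*} [NormedAddCommGroup E] [NormedSpace ℝ E] {g : ℝ → E} :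
    Integrable g γ ↔ Integrable (fun x => gaussianPDFReal 0 1 x • g x) volume := by
  rw [γ_eq, integrable_withDensity_iff_integrable_smul
    (measurable_gaussianPDFReal 0 1).real_toNNReal]
  constructor <;> intro h <;> refine h.congr (Filter.Eventually.of_forall fun x => ?_) <;>
    simp only [NNReal.smul_def, Real.coe_toNNReal _ (gaussianPDFReal_nonneg 0 1 x)]

lemma gaussianPDFReal_01 (x : ℝ) :
    gaussianPDFReal 0 1 x = (Real.sqrt (2 * π))⁻¹ * Real.exp (-x ^ 2 / 2) := by
  rw [gaussianPDFReal_def]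
  norm_num [sub_zero]

lemma sqrt_two_pi_pos : (0:ℝ) < Real.sqrt (2 * π) :=
  Real.sqrt_pos.2 (by positivity)

lemma cexp_sqrt_two_pi : ((Real.sqrt (2 * π) : ℝ) : ℂ) = ((2 * π : ℝ) : ℂ) ^ (1/2 : ℂ) := by
  rw [Real.sqrt_eq_rpow, Complex.ofReal_cpow (by positivity)]
  norm_num

lemma pdf_smul_cexp (α : ℂ) (x : ℝ) :
    gaussianPDFReal 0 1 x • Complex.exp (α * x)
      = (Real.sqrt (2 * π))⁻¹ • Complex.exp (-(1/2 : ℂ) * x ^ 2 + α * x + 0) := by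
  rw [gaussianPDFReal_01, Complex.real_smul, Complex.real_smul, Complex.ofReal_mul,
    Complex.ofReal_exp, mul_assoc, ← Complex.exp_add]
  congr 2
  push_cast
  ring

/-- Complex exponential moment of the standard Gaussian. -/
lemma integral_cexp_gaussian (α : ℂ) :
    ∫ x, Complex.exp (α * x) ∂γ = Complex.exp (α ^ 2 / 2) := by
  rw [integral_γ]
  simp_rw [pdf_smul_cexp α]
  rw [integral_smul, integral_cexp_quadratic (by norm_num : (-(1/2:ℂ)).re < 0) α 0]
  have h1 : (π : ℂ) / -(-(1/2:ℂ)) = ((2 * π : ℝ) : ℂ) := by push_cast; ring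
  have h2 : (0 : ℂ) - α ^ 2 / (4 * -(1/2:ℂ)) = α ^ 2 / 2 := by ring
  rw [h1, h2, ← cexp_sqrt_two_pi, Complex.real_smul, Complex.ofReal_inv, ← mul_assoc,
    inv_mul_cancel₀ (by exact_mod_cast sqrt_two_pi_pos.ne'), one_mul]

lemma integrable_cexp_gaussian (α : ℂ) :
    Integrable (fun x : ℝ => Complex.exp (α * x)) γ := by
  rw [integrable_γ_iff]
  simp_rw [pdf_smul_cexp α]
  exact (integrable_cexp_quadratic (by norm_num : (0:ℝ) < ((1:ℂ)/2).re) α 0).smul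
    ((Real.sqrt (2 * π))⁻¹ : ℝ)

/-- Real exponential moment of the standard Gaussian. -/
lemma rexp_pdf_smul (s : ℝ) (x : ℝ) :
    gaussianPDFReal 0 1 x • Real.exp (s * x)
      = ((Real.sqrt (2 * π))⁻¹ * Real.exp (s ^ 2 / 2)) • Real.exp (-(1/2) * (x - s) ^ 2) := by
  rw [gaussianPDFReal_01, smul_eq_mul, smul_eq_mul, mul_assoc, ← Real.exp_add,
    mul_assoc, ← Real.exp_add]
  congr 2
  ring

lemma integral_rexp_gaussian (s : ℝ) :
    ∫ x, Real.exp (s * x) ∂γ = Real.exp (s ^ 2 / 2) := by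
  rw [integral_γ]
  simp_rw [rexp_pdf_smul s]
  rw [integral_smul, integral_sub_right_eq_self (μ := volume)
    (fun y : ℝ => Real.exp (-(1/2) * y ^ 2)) s, integral_gaussian,
    show π / (1/2 : ℝ) = 2 * π by ring, smul_eq_mul]
  field_simp

lemma integrable_rexp_gaussian (s : ℝ) :
    Integrable (fun x : ℝ => Real.exp (s * x)) γ := by
  rw [integrable_γ_iff]
  simp_rw [rexp_pdf_smul s]
  exact ((integrable_exp_neg_mul_sq (by norm_num : (0:ℝ) < 1/2)).comp_sub_right s).smul
    (((Real.sqrt (2 * π))⁻¹ * Real.exp (s ^ 2 / 2)) : ℝ)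

/-- Squared-exponential moment of the standard Gaussian. -/
lemma integral_rexp_sq_gaussian {t : ℝ} (ht : t < 1/2) :
    ∫ x, Real.exp (t * x ^ 2) ∂γ = (Real.sqrt (1 - 2 * t))⁻¹ := by
  have hb : (0:ℝ) < 1/2 - t := by linarith
  rw [integral_γ]
  have h : ∀ x : ℝ, gaussianPDFReal 0 1 x • Real.exp (t * x ^ 2)
      = (Real.sqrt (2 * π))⁻¹ • Real.exp (-(1/2 - t) * x ^ 2) := by
    intro x
    rw [gaussianPDFReal_01, smul_eq_mul, smul_eq_mul, mul_assoc, ← Real.exp_add]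
    congr 2
    ring
  simp_rw [h]
  rw [integral_smul, integral_gaussian, smul_eq_mul]
  rw [show π / (1/2 - t) = (2 * π) * (1 - 2*t)⁻¹ by field_simp]
  rw [Real.sqrt_mul (by positivity : (0:ℝ) ≤ 2 * π) (1 - 2*t)⁻¹]
  rw [← mul_assoc, inv_mul_cancel₀ sqrt_two_pi_pos.ne', one_mul, Real.sqrt_inv]

lemma integrable_rexp_sq_gaussian {t : ℝ} (ht : t < 1/2) :
    Integrable (fun x : ℝ => Real.exp (t * x ^ 2)) γ := by
  have hb : (0:ℝ) < 1/2 - t := by linarith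
  rw [integrable_γ_iff]
  have h : ∀ x : ℝ, gaussianPDFReal 0 1 x • Real.exp (t * x ^ 2)
      = (Real.sqrt (2 * π))⁻¹ • Real.exp (-(1/2 - t) * x ^ 2) := by
    intro x
    rw [gaussianPDFReal_01, smul_eq_mul, smul_eq_mul, mul_assoc, ← Real.exp_add]
    congr 2
    ring
  simp_rw [h]
  exact (integrable_exp_neg_mul_sq hb).smul ((Real.sqrt (2 * π))⁻¹ : ℝ)


/-! ### The moment of `⟨w, u⟩²` under the product Gaussian -/

variable {N : ℕ}

def Y (u : Fin N → ℝ) (w : Fin N → GR) : ℝ := ∑ s, u s * (w s).real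

lemma measurable_Y (u : Fin N → ℝ) : Measurable (Y u) :=
  Finset.measurable_sum _ fun s _ =>
    (measurable_GR_real.comp (measurable_pi_apply s)).const_mul _

lemma integrable_GR {E : Type*} [NormedAddCommGroup E] {f : ℝ → E} (hf : Integrable f γ) :
    Integrable (fun x : GR => f x.real) (volume : Measure GR) := hf

lemma integral_GR {E : Type*} [NormedAddCommGroup E] [NormedSpace ℝ E] (f : ℝ → E) :
    (∫ x : GR, f x.real) = ∫ x, f x ∂γ := rfl

lemma Y_prod_rexp (c : ℝ) (w : Fin N → GR) (u : Fin N → ℝ) :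
    Real.exp (c * Y u w) = ∏ s, Real.exp (c * u s * (w s).real) := by
  rw [← Real.exp_sum]
  congr 1
  rw [Y, Finset.mul_sum]
  exact Finset.sum_congr rfl fun s _ => by ring

lemma sum_sq_mul {u : Fin N → ℝ} (hu : ∑ s, u s ^ 2 = 1) (c : ℝ) :
    ∑ s, (c * u s) ^ 2 / 2 = c ^ 2 / 2 := by
  simp_rw [mul_pow, mul_div_assoc]
  rw [← Finset.mul_sum, ← Finset.sum_div, hu]
  ring

/-- Case `0 ≤ t`. -/
lemma moment_Y_sq_nonneg (u : Fin N → ℝ) (hu : ∑ s, u s ^ 2 = 1)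
    {t : ℝ} (ht0 : 0 ≤ t) (ht : t < 1/2) :
    Integrable (fun w : Fin N → GR => Real.exp (t * Y u w ^ 2)) ∧
    (∫ w : Fin N → GR, Real.exp (t * Y u w ^ 2)) = (Real.sqrt (1 - 2*t))⁻¹ := by
  set a := Real.sqrt (2*t) with ha_def
  have ha : a ^ 2 = 2 * t := Real.sq_sqrt (by linarith)
  have key : ∀ w : Fin N → GR,
      Real.exp (t * Y u w ^ 2) = ∫ z, Real.exp (a * z * Y u w) ∂γ := by
    intro w
    have h1 := integral_rexp_gaussian (a * Y u w)
    calc Real.exp (t * Y u w ^ 2) = Real.exp ((a * Y u w) ^ 2 / 2) := by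
          rw [mul_pow, ha]; ring_nf
      _ = ∫ z, Real.exp (a * Y u w * z) ∂γ := h1.symm
      _ = ∫ z, Real.exp (a * z * Y u w) ∂γ := by
          congr 1 with z; ring_nf
  have slice_int : ∀ z : ℝ,
      Integrable (fun w : Fin N → GR => Real.exp (a * z * Y u w)) := by
    intro z
    have : Integrable (fun w : Fin N → GR =>
        ∏ s, Real.exp (a * z * u s * (w s).real)) :=
      Integrable.fintype_prod (𝕜 := ℝ)
        (f := fun s (x : GR) => Real.exp (a * z * u s * x.real))
        fun s => integrable_GR (integrable_rexp_gaussian (a * z * u s))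
    exact this.congr (Filter.Eventually.of_forall fun w => (Y_prod_rexp (a*z) w u).symm)
  have slice_val : ∀ z : ℝ,
      (∫ w : Fin N → GR, Real.exp (a * z * Y u w)) = Real.exp (t * z ^ 2) := by
    intro z
    simp_rw [Y_prod_rexp (a*z)]
    rw [integral_fintype_prod_volume_eq_prod (𝕜 := ℝ)
      (f := fun s (x : GR) => Real.exp (a * z * u s * x.real))]
    have hval : ∀ s, (∫ x : GR, Real.exp (a * z * u s * x.real))
        = Real.exp ((a * z * u s) ^ 2 / 2) := fun s =>
      (integral_GR _).trans (integral_rexp_gaussian _)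
    rw [Finset.prod_congr rfl fun s _ => hval s, ← Real.exp_sum, sum_sq_mul hu]
    congr 1
    rw [mul_pow, ha]; ring
  have measF : AEStronglyMeasurable
      (Function.uncurry fun (w : Fin N → GR) (z : ℝ) => Real.exp (a * z * Y u w))
      ((volume : Measure (Fin N → GR)).prod γ) := by
    apply Measurable.aestronglyMeasurable
    exact Real.measurable_exp.comp
      (((measurable_snd.const_mul a).mul ((measurable_Y u).comp measurable_fst)))
  have intF : Integrable
      (Function.uncurry fun (w : Fin N → GR) (z : ℝ) => Real.exp (a * z * Y u w))
      ((volume : Measure (Fin N → GR)).prod γ) := by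
    rw [integrable_prod_iff' measF]
    constructor
    · exact Filter.Eventually.of_forall fun z => slice_int z
    · have hnorm : ∀ z : ℝ,
          (∫ w : Fin N → GR, ‖Real.exp (a * z * Y u w)‖) = Real.exp (t * z ^ 2) := by
        intro z
        rw [← slice_val z]
        congr 1 with w
        exact Real.norm_of_nonneg (Real.exp_pos _).le
      exact (integrable_rexp_sq_gaussian ht).congr
        (Filter.Eventually.of_forall fun z => (hnorm z).symm)
  have swap := MeasureTheory.integral_integral_swap intF
  constructor
  · exact intF.integral_prod_left.congr
      (Filter.Eventually.of_forall fun w => (key w).symm)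
  · calc (∫ w : Fin N → GR, Real.exp (t * Y u w ^ 2))
        = ∫ w : Fin N → GR, ∫ z, Real.exp (a * z * Y u w) ∂γ := by
          exact integral_congr_ae (Filter.Eventually.of_forall fun w => key w)
      _ = ∫ z, (∫ w : Fin N → GR, Real.exp (a * z * Y u w)) ∂γ := swap
      _ = ∫ z, Real.exp (t * z ^ 2) ∂γ :=
          integral_congr_ae (Filter.Eventually.of_forall fun z => slice_val z)
      _ = (Real.sqrt (1 - 2*t))⁻¹ := integral_rexp_sq_gaussian ht


lemma Y_prod_cexp (c : ℂ) (w : Fin N → GR) (u : Fin N → ℝ) :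
    Complex.exp (c * Y u w) = ∏ s, Complex.exp (c * u s * (w s).real) := by
  rw [← Complex.exp_sum]
  congr 1
  rw [Y]
  push_cast
  rw [Finset.mul_sum]
  exact Finset.sum_congr rfl fun s _ => by ring

/-- Case `t < 0`. -/
lemma moment_Y_sq_neg (u : Fin N → ℝ) (hu : ∑ s, u s ^ 2 = 1)
    {t : ℝ} (ht0 : t < 0) :
    Integrable (fun w : Fin N → GR => Real.exp (t * Y u w ^ 2)) ∧
    (∫ w : Fin N → GR, Real.exp (t * Y u w ^ 2)) = (Real.sqrt (1 - 2*t))⁻¹ := by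
  have ht : t < 1/2 := by linarith
  set a := Real.sqrt (-2*t) with ha_def
  have ha : a ^ 2 = -2 * t := Real.sq_sqrt (by linarith)
  set α : ℂ := (a : ℂ) * Complex.I with hα_def
  have hα : α ^ 2 = ((2 * t : ℝ) : ℂ) := by
    rw [hα_def, mul_pow, Complex.I_sq]
    push_cast [← Complex.ofReal_pow, ha]
    ring
  have key : ∀ w : Fin N → GR,
      ((Real.exp (t * Y u w ^ 2) : ℝ) : ℂ) = ∫ z, Complex.exp (α * z * Y u w) ∂γ := by
    intro w
    have h1 := integral_cexp_gaussian (α * Y u w)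
    calc ((Real.exp (t * Y u w ^ 2) : ℝ) : ℂ)
        = Complex.exp ((α * Y u w) ^ 2 / 2) := by
          rw [mul_pow, hα, Complex.ofReal_exp]
          push_cast
          ring_nf
      _ = ∫ z, Complex.exp (α * Y u w * z) ∂γ := h1.symm
      _ = ∫ z, Complex.exp (α * z * Y u w) ∂γ := by
          congr 1 with z; ring_nf
  have norm_key : ∀ (z : ℝ) (w : Fin N → GR), ‖Complex.exp (α * z * Y u w)‖ = 1 := by
    intro z w
    rw [Complex.norm_exp]
    have : (α * z * Y u w).re = 0 := by
      simp [hα_def, mul_comm, mul_assoc, mul_left_comm]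
    rw [this, Real.exp_zero]
  have measF : AEStronglyMeasurable
      (Function.uncurry fun (w : Fin N → GR) (z : ℝ) => Complex.exp (α * z * Y u w))
      ((volume : Measure (Fin N → GR)).prod γ) := by
    apply Measurable.aestronglyMeasurable
    apply Complex.measurable_exp.comp
    apply Measurable.mul
    · exact (measurable_const.mul (Complex.measurable_ofReal.comp measurable_snd))
    · exact Complex.measurable_ofReal.comp ((measurable_Y u).comp measurable_fst)
  have intF : Integrable
      (Function.uncurry fun (w : Fin N → GR) (z : ℝ) => Complex.exp (α * z * Y u w))
      ((volume : Measure (Fin N → GR)).prod γ) := by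
    refine ⟨measF, ?_⟩
    apply HasFiniteIntegral.of_bounded (C := 1)
    exact Filter.Eventually.of_forall fun p => le_of_eq (norm_key p.2 p.1)
  have slice_val : ∀ z : ℝ,
      (∫ w : Fin N → GR, Complex.exp (α * z * Y u w))
        = ((Real.exp (t * z ^ 2) : ℝ) : ℂ) := by
    intro z
    simp_rw [Y_prod_cexp (α * z)]
    rw [integral_fintype_prod_volume_eq_prod (𝕜 := ℂ)
      (f := fun s (x : GR) => Complex.exp (α * z * u s * x.real))]
    have hval : ∀ s, (∫ x : GR, Complex.exp (α * z * u s * x.real))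
        = Complex.exp ((α * z * u s) ^ 2 / 2) := fun s =>
      (integral_GR _).trans (integral_cexp_gaussian _)
    rw [Finset.prod_congr rfl fun s _ => hval s, ← Complex.exp_sum]
    have hsum : ∑ s, (α * z * u s) ^ 2 / 2 = ((t * z ^ 2 : ℝ) : ℂ) := by
      have : ∀ s : Fin N, (α * z * u s) ^ 2 / 2
          = ((u s ^ 2 : ℝ) : ℂ) * (((t * z ^ 2 : ℝ) : ℂ)) := by
        intro s
        rw [mul_pow, mul_pow, hα]
        push_cast
        ring
      rw [Finset.sum_congr rfl fun s _ => this s, ← Finset.sum_mul, ← Complex.ofReal_sum]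
      norm_cast
      rw [hu]
      ring
    rw [hsum, Complex.ofReal_exp]
  have swap := MeasureTheory.integral_integral_swap intF
  have main : ((∫ w : Fin N → GR, Real.exp (t * Y u w ^ 2) : ℝ) : ℂ)
      = ((Real.sqrt (1 - 2*t))⁻¹ : ℝ) := by
    have step0 : ((∫ w : Fin N → GR, Real.exp (t * Y u w ^ 2) : ℝ) : ℂ)
        = ∫ w : Fin N → GR, ((Real.exp (t * Y u w ^ 2) : ℝ) : ℂ) := integral_ofReal.symm
    rw [step0]
    calc (∫ w : Fin N → GR, ((Real.exp (t * Y u w ^ 2) : ℝ) : ℂ))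
        = ∫ w : Fin N → GR, ∫ z, Complex.exp (α * z * Y u w) ∂γ :=
          integral_congr_ae (Filter.Eventually.of_forall fun w => key w)
      _ = ∫ z, (∫ w : Fin N → GR, Complex.exp (α * z * Y u w)) ∂γ := swap
      _ = ∫ z, ((Real.exp (t * z ^ 2) : ℝ) : ℂ) ∂γ :=
          integral_congr_ae (Filter.Eventually.of_forall fun z => slice_val z)
      _ = ((∫ z, Real.exp (t * z ^ 2) ∂γ : ℝ) : ℂ) := integral_ofReal
      _ = ((Real.sqrt (1 - 2*t))⁻¹ : ℝ) := by rw [integral_rexp_sq_gaussian ht]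
  constructor
  · refine ⟨?_, ?_⟩
    · exact (Real.measurable_exp.comp ((measurable_Y u).pow_const 2 |>.const_mul t)).aestronglyMeasurable
    · apply HasFiniteIntegral.of_bounded (C := 1)
      refine Filter.Eventually.of_forall fun w => ?_
      rw [Real.norm_of_nonneg (Real.exp_pos _).le, ← Real.exp_zero]
      apply Real.exp_le_exp.2
      have : Y u w ^ 2 ≥ 0 := sq_nonneg _
      nlinarith
  · exact_mod_cast main

/-- Combined: moment of `exp (t ⟨w,u⟩²)` for `t < 1/2`. -/
lemma moment_Y_sq (u : Fin N → ℝ) (hu : ∑ s, u s ^ 2 = 1) {t : ℝ} (ht : t < 1/2) :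
    Integrable (fun w : Fin N → GR => Real.exp (t * Y u w ^ 2)) ∧
    (∫ w : Fin N → GR, Real.exp (t * Y u w ^ 2)) = (Real.sqrt (1 - 2*t))⁻¹ := by
  rcases le_or_gt 0 t with h | h
  · exact moment_Y_sq_nonneg u hu h ht
  · exact moment_Y_sq_neg u hu h


/-! ### The chi-square variable and Chernoff bounds -/

instance : IsProbabilityMeasure (volume : Measure (Fin N → GR)) :=
  inferInstanceAs (IsProbabilityMeasure (Measure.pi fun _ : Fin N => (volume : Measure GR)))

variable {n : ℕ}

def X (u : Fin N → ℝ) (ω : Fin n → Fin N → GR) : ℝ := ∑ r, Y u (ω r) ^ 2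

instance : IsProbabilityMeasure (volume : Measure (Fin n → Fin N → GR)) :=
  inferInstanceAs (IsProbabilityMeasure
    (Measure.pi fun _ : Fin n => (volume : Measure (Fin N → GR))))

lemma mgf_X (u : Fin N → ℝ) (hu : ∑ s, u s ^ 2 = 1) {t : ℝ} (ht : t < 1/2) :
    Integrable (fun ω : Fin n → Fin N → GR => Real.exp (t * X u ω)) ∧
    (∫ ω : Fin n → Fin N → GR, Real.exp (t * X u ω)) = ((Real.sqrt (1 - 2*t))⁻¹) ^ n := by
  have hprod : ∀ ω : Fin n → Fin N → GR,
      Real.exp (t * X u ω) = ∏ r, Real.exp (t * Y u (ω r) ^ 2) := by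
    intro ω
    rw [← Real.exp_sum]
    congr 1
    rw [X, Finset.mul_sum]
  constructor
  · have : Integrable (fun ω : Fin n → Fin N → GR =>
        ∏ r, Real.exp (t * Y u (ω r) ^ 2)) :=
      Integrable.fintype_prod (𝕜 := ℝ)
        (f := fun _ (w : Fin N → GR) => Real.exp (t * Y u w ^ 2))
        fun _ => (moment_Y_sq u hu ht).1
    exact this.congr (Filter.Eventually.of_forall fun ω => (hprod ω).symm)
  · simp_rw [hprod]
    rw [integral_fintype_prod_volume_eq_prod (𝕜 := ℝ)
      (f := fun _ (w : Fin N → GR) => Real.exp (t * Y u w ^ 2))]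
    rw [Finset.prod_congr rfl fun r _ => (moment_Y_sq u hu ht).2, Finset.prod_const,
      Finset.card_univ, Fintype.card_fin]

lemma chernoff_exponent_algebra {b t : ℝ} (hb0 : 0 < b) (hbt : 1 - 2*t = 1/b) (nn : ℕ) :
    Real.exp (-t * ((nn:ℝ) * b)) * ((Real.sqrt (1 - 2*t))⁻¹) ^ nn
      = Real.exp (-((nn:ℝ)/2) * (b - 1 - Real.log b)) := by
  have h1 : ((Real.sqrt (1 - 2*t))⁻¹) ^ nn = Real.exp ((nn:ℝ) * (Real.log b * (1/2))) := by
    rw [hbt, one_div, Real.sqrt_inv, inv_inv, Real.sqrt_eq_rpow,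
      Real.rpow_def_of_pos hb0, ← Real.exp_nat_mul]
  have h2 : t * b = (b - 1) / 2 := by
    have hb' : (1 - 2*t) * b = 1 := by rw [hbt]; field_simp
    linear_combination (-(1:ℝ)/2) * hb'
  rw [h1, ← Real.exp_add]
  congr 1
  have : -t * ((nn:ℝ) * b) = -(nn:ℝ) * (t * b) := by ring
  rw [this, h2]
  ring

lemma chernoff_upper (u : Fin N → ℝ) (hu : ∑ s, u s ^ 2 = 1) {b : ℝ} (hb : 1 ≤ b) :
    (volume {ω : Fin n → Fin N → GR | (n:ℝ) * b ≤ X u ω}).toReal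
      ≤ Real.exp (-((n:ℝ)/2) * (b - 1 - Real.log b)) := by
  have hb0 : (0:ℝ) < b := lt_of_lt_of_le one_pos hb
  set t := (1 - 1/b)/2 with ht_def
  have hinvb : 0 < 1/b := by positivity
  have hinvb1 : 1/b ≤ 1 := by rw [div_le_one hb0]; exact hb
  have ht0 : 0 ≤ t := by rw [ht_def]; linarith
  have ht : t < 1/2 := by rw [ht_def]; linarith
  have hbt : 1 - 2*t = 1/b := by rw [ht_def]; ring
  obtain ⟨hint, hval⟩ := mgf_X (n := n) u hu ht
  have hch := measure_ge_le_exp_mul_mgf (μ := (volume : Measure (Fin n → Fin N → GR)))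
    (X := X u) ((n:ℝ) * b) ht0 hint
  rw [mgf] at hch
  calc (volume {ω : Fin n → Fin N → GR | (n:ℝ) * b ≤ X u ω}).toReal
      ≤ Real.exp (-t * ((n:ℝ) * b)) * ∫ ω : Fin n → Fin N → GR, Real.exp (t * X u ω) := hch
    _ = _ := by rw [hval]; exact chernoff_exponent_algebra hb0 hbt n

lemma chernoff_lower (u : Fin N → ℝ) (hu : ∑ s, u s ^ 2 = 1) {b : ℝ}
    (hb0 : 0 < b) (hb : b ≤ 1) :
    (volume {ω : Fin n → Fin N → GR | X u ω ≤ (n:ℝ) * b}).toReal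
      ≤ Real.exp (-((n:ℝ)/2) * (b - 1 - Real.log b)) := by
  set t := -(1/b - 1)/2 with ht_def
  have hinvb : 1 ≤ 1/b := by rw [le_div_iff₀ hb0]; linarith
  have ht0 : t ≤ 0 := by rw [ht_def]; linarith
  have ht : t < 1/2 := by rw [ht_def]; linarith
  have hbt : 1 - 2*t = 1/b := by rw [ht_def]; ring
  obtain ⟨hint, hval⟩ := mgf_X (n := n) u hu ht
  have hch := measure_le_le_exp_mul_mgf (μ := (volume : Measure (Fin n → Fin N → GR)))
    (X := X u) ((n:ℝ) * b) ht0 hint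
  rw [mgf] at hch
  calc (volume {ω : Fin n → Fin N → GR | X u ω ≤ (n:ℝ) * b}).toReal
      ≤ Real.exp (-t * ((n:ℝ) * b)) * ∫ ω : Fin n → Fin N → GR, Real.exp (t * X u ω) := hch
    _ = _ := by rw [hval]; exact chernoff_exponent_algebra hb0 hbt n


/-! ### The balanced scaling constant -/

lemma balance_lemma {ε : ℝ} (hε0 : 0 < ε) (hε1 : ε < 1) :
    ∃ c : ℝ, 0 < c ∧ c*(1-ε) < 1 ∧ 1 < c*(1+ε) ∧
      ε^2/2 ≤ c*(1-ε) - 1 - Real.log (c*(1-ε)) ∧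
      ε^2/2 ≤ c*(1+ε) - 1 - Real.log (c*(1+ε)) := by
  have h1ε : (0:ℝ) < 1 - ε := by linarith
  have h1ε' : (0:ℝ) < 1 + ε := by linarith
  set R := (1+ε)/(1-ε) with hR_def
  have hR1 : 1 < R := by rw [hR_def, lt_div_iff₀ h1ε]; linarith
  have hR0 : 0 < R := by linarith
  have hlogR : 0 < Real.log R := Real.log_pos hR1
  set c := Real.log R / (2*ε) with hc_def
  have hc0 : 0 < c := div_pos hlogR (by linarith)
  have hl0 : 0 < c*(1-ε) := mul_pos hc0 h1ε
  have hu0 : 0 < c*(1+ε) := mul_pos hc0 h1ε'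
  have hlogRlt : Real.log R < R - 1 := Real.log_lt_sub_one_of_pos hR0 hR1.ne'
  have hl1 : c*(1-ε) < 1 := by
    have hkey : (R - 1)*(1-ε) = 2*ε := by
      rw [hR_def]; field_simp; ring
    have h2 : Real.log R * (1-ε) < 2*ε := by
      nlinarith [mul_lt_mul_of_pos_right hlogRlt h1ε]
    rw [hc_def, div_mul_eq_mul_div, div_lt_one (by linarith)]
    linarith
  have hu1 : 1 < c*(1+ε) := by
    have hRinv : R⁻¹ = (1-ε)/(1+ε) := by
      rw [hR_def, inv_div]
    have hRinv1 : R⁻¹ ≠ 1 := by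
      rw [hRinv]; intro h
      rw [div_eq_one_iff_eq h1ε'.ne'] at h
      linarith
    have hlogRgt : 1 - R⁻¹ < Real.log R := by
      have := Real.log_lt_sub_one_of_pos (inv_pos.2 hR0) hRinv1
      rw [Real.log_inv] at this
      linarith
    have hkey : (1 - R⁻¹)*(1+ε) = 2*ε := by
      rw [hRinv]; field_simp; ring
    have h2 : 2*ε < Real.log R * (1+ε) := by
      nlinarith [mul_lt_mul_of_pos_right hlogRgt h1ε']
    rw [hc_def, div_mul_eq_mul_div, lt_div_iff₀ (by linarith)]
    linarith
  have hbal : c*(1+ε) - c*(1-ε) = Real.log (c*(1+ε)) - Real.log (c*(1-ε)) := by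
    have hq : c*(1+ε) / (c*(1-ε)) = R := by
      rw [hR_def]
      field_simp
    rw [← Real.log_div hu0.ne' hl0.ne', hq, hc_def]
    field_simp
    ring
  have hsum : ε^2 ≤ (c*(1+ε) - 1 - Real.log (c*(1+ε))) + (c*(1-ε) - 1 - Real.log (c*(1-ε))) := by
    have hlogc : Real.log c ≤ c - 1 := Real.log_le_sub_one_of_pos hc0
    have h1e2 : (0:ℝ) < 1 - ε^2 := by nlinarith
    have hlog1e : Real.log (1 - ε^2) ≤ -ε^2 := by
      have := Real.log_le_sub_one_of_pos h1e2
      linarith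
    have hul : Real.log (c*(1+ε)) + Real.log (c*(1-ε))
        = 2*Real.log c + Real.log (1-ε^2) := by
      rw [← Real.log_mul hu0.ne' hl0.ne',
        show c*(1+ε) * (c*(1-ε)) = c^2 * (1-ε^2) by ring,
        Real.log_mul (by positivity) h1e2.ne', Real.log_pow]
      push_cast
      ring
    linarith
  exact ⟨c, hc0, hl1, hu1, by linarith, by linarith⟩


/-! ### Unit directions and the linear map given by a matrix -/

open scoped Classical

def direction (hN : 0 < N) (v : EuclideanSpace ℝ (Fin N)) : Fin N → ℝ :=
  if v = (0 : EuclideanSpace ℝ (Fin N)) then (fun s => if s = (⟨0, hN⟩ : Fin N) then 1 else 0)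
  else fun s => ‖v‖⁻¹ * v s

lemma sum_sq_eq_norm_sq (v : EuclideanSpace ℝ (Fin N)) : ∑ s, v s ^ 2 = ‖v‖ ^ 2 := by
  rw [EuclideanSpace.norm_eq, Real.sq_sqrt (by positivity)]
  exact Finset.sum_congr rfl fun s _ => by rw [Real.norm_eq_abs, sq_abs]

lemma direction_unit (hN : 0 < N) (v : EuclideanSpace ℝ (Fin N)) :
    ∑ s, direction hN v s ^ 2 = 1 := by
  rw [direction]
  by_cases h : v = (0 : EuclideanSpace ℝ (Fin N))
  · rw [if_pos h]
    have : ∀ s : Fin N, (if s = (⟨0, hN⟩ : Fin N) then (1:ℝ) else 0) ^ 2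
        = if s = (⟨0, hN⟩ : Fin N) then (1:ℝ) else 0 := by
      intro s; split <;> norm_num
    rw [Finset.sum_congr rfl fun s _ => this s, Finset.sum_ite_eq' Finset.univ _ (fun _ => (1:ℝ))]
    simp
  · rw [if_neg h]
    have hv : ‖v‖ ≠ 0 := norm_ne_zero_iff.2 h
    have : ∀ s : Fin N, (‖v‖⁻¹ * v s) ^ 2 = ‖v‖⁻¹ ^ 2 * v s ^ 2 := fun s => by ring
    rw [Finset.sum_congr rfl fun s _ => this s, ← Finset.mul_sum, sum_sq_eq_norm_sq]
    field_simp

lemma direction_neg (hN : 0 < N) (v : EuclideanSpace ℝ (Fin N)) (w : Fin N → GR) :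
    Y (direction hN (-v)) w ^ 2 = Y (direction hN v) w ^ 2 := by
  by_cases h : v = (0 : EuclideanSpace ℝ (Fin N))
  · rw [h, neg_zero]
  · have h' : -v ≠ (0 : EuclideanSpace ℝ (Fin N)) := fun hh => h (by simpa using hh)
    have : Y (direction hN (-v)) w = -(Y (direction hN v) w) := by
      rw [Y, Y, ← Finset.sum_neg_distrib]
      refine Finset.sum_congr rfl fun s _ => ?_
      rw [direction, direction, if_neg h, if_neg h', norm_neg]
      have : (-v) s = -(v s) := rfl
      rw [this]
      ring
    rw [this, neg_pow]
    ring
  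
lemma X_direction_neg (hN : 0 < N) (v : EuclideanSpace ℝ (Fin N))
    (ω : Fin n → Fin N → GR) :
    X (direction hN (-v)) ω = X (direction hN v) ω := by
  rw [X, X]
  exact Finset.sum_congr rfl fun r _ => direction_neg hN v (ω r)

/-- The linear map associated to a matrix, between Euclidean spaces. -/
def LofM (A : Fin n → Fin N → ℝ) : EuclideanSpace ℝ (Fin N) →ₗ[ℝ] EuclideanSpace ℝ (Fin n) where
  toFun v := (WithLp.equiv 2 (Fin n → ℝ)).symm (fun r => ∑ s, A r s * v s)
  map_add' v w := by
    ext r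
    simp only [WithLp.equiv_symm_apply, PiLp.toLp_apply, PiLp.add_apply, mul_add]
    rw [Finset.sum_add_distrib]
  map_smul' a v := by
    ext r
    simp only [WithLp.equiv_symm_apply, PiLp.toLp_apply, PiLp.smul_apply, smul_eq_mul, RingHom.id_apply,
      Finset.mul_sum]
    exact Finset.sum_congr rfl fun s _ => by ring

lemma norm_LofM_sq (A : Fin n → Fin N → ℝ) (v : EuclideanSpace ℝ (Fin N)) :
    ‖LofM A v‖ ^ 2 = ∑ r, (∑ s, A r s * v s) ^ 2 := by
  rw [EuclideanSpace.norm_eq, Real.sq_sqrt (by positivity)]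
  refine Finset.sum_congr rfl fun r _ => ?_
  have : (LofM A v) r = ∑ s, A r s * v s := rfl
  rw [this, Real.norm_eq_abs, sq_abs]

end JLAux

open scoped RealInnerProductSpace

/-- **Johnson–Lindenstrauss Lemma.** -/
theorem johnson_lindenstrauss (ε : ℝ) (hε0 : 0 < ε) (hε1 : ε < 1)
    (N k : ℕ) (hN : 0 < N) (hk : 0 < k)
    (x : Fin k → EuclideanSpace ℝ (Fin N))
    (n : ℕ) (hn : (n : ℝ) > 8 * Real.log k / ε ^ 2) :
    ∃ L : EuclideanSpace ℝ (Fin N) →ₗ[ℝ] EuclideanSpace ℝ (Fin n),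
      ∀ i j : Fin k,
        (1 - ε) * ‖x i - x j‖ ^ 2 ≤ ‖L (x i) - L (x j)‖ ^ 2 ∧
        ‖L (x i) - L (x j)‖ ^ 2 ≤ (1 + ε) * ‖x i - x j‖ ^ 2 := by
  classical
  obtain ⟨c, hc0, hl1, hu1, hexp_l, hexp_u⟩ := JLAux.balance_lemma hε0 hε1
  have hk0 : (0:ℝ) < k := by exact_mod_cast hk
  have hlogk : 0 ≤ Real.log k := Real.log_nonneg (by exact_mod_cast hk)
  have hε2 : (0:ℝ) < ε^2 := by positivity
  have hn0 : (0:ℝ) < n := lt_of_le_of_lt (by positivity) hn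
  set dir : Fin k × Fin k → Fin N → ℝ :=
    fun p => JLAux.direction hN (x p.1 - x p.2) with hdir
  set B : Fin k × Fin k → Set (Fin n → Fin N → JLAux.GR) := fun p =>
    if p.1 < p.2 then {ω | (n:ℝ)*(c*(1+ε)) ≤ JLAux.X (dir p) ω}
    else {ω | JLAux.X (dir p) ω ≤ (n:ℝ)*(c*(1-ε))} with hB
  have hmono : ∀ b : ℝ, ε^2/2 ≤ b →
      Real.exp (-((n:ℝ)/2)*b) ≤ Real.exp (-((n:ℝ)/2)*(ε^2/2)) := by
    intro b hb
    apply Real.exp_le_exp.2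
    nlinarith
  have hbound : ∀ p : Fin k × Fin k,
      (volume : Measure (Fin n → Fin N → JLAux.GR)) (B p)
        ≤ ENNReal.ofReal (Real.exp (-((n:ℝ)/2) * (ε^2/2))) := by
    intro p
    have hstep : ((volume : Measure (Fin n → Fin N → JLAux.GR)) (B p)).toReal
        ≤ Real.exp (-((n:ℝ)/2) * (ε^2/2)) := by
      by_cases h : p.1 < p.2
      · rw [hB]
        simp only [if_pos h]
        exact (JLAux.chernoff_upper (n := n) (dir p)
          (JLAux.direction_unit hN _) hu1.le).trans (hmono _ hexp_u)
      · rw [hB]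
        simp only [if_neg h]
        exact (JLAux.chernoff_lower (n := n) (dir p)
          (JLAux.direction_unit hN _) (mul_pos hc0 (by linarith)) hl1.le).trans
          (hmono _ hexp_l)
    calc (volume : Measure (Fin n → Fin N → JLAux.GR)) (B p)
        = ENNReal.ofReal (((volume : Measure (Fin n → Fin N → JLAux.GR)) (B p)).toReal) :=
          (ENNReal.ofReal_toReal (measure_ne_top _ _)).symm
      _ ≤ _ := ENNReal.ofReal_le_ofReal hstep
  set bad := ⋃ p ∈ (Finset.univ.offDiag : Finset (Fin k × Fin k)), B p with hbad_def
  have hbad : (volume : Measure (Fin n → Fin N → JLAux.GR)) bad < 1 := by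
    have h1 : (volume : Measure (Fin n → Fin N → JLAux.GR)) bad
        ≤ ∑ p ∈ Finset.univ.offDiag, (volume : Measure (Fin n → Fin N → JLAux.GR)) (B p) :=
      measure_biUnion_finset_le _ _
    have h2 : ∑ p ∈ Finset.univ.offDiag, (volume : Measure (Fin n → Fin N → JLAux.GR)) (B p)
        ≤ ∑ _p ∈ (Finset.univ.offDiag : Finset (Fin k × Fin k)),
            ENNReal.ofReal (Real.exp (-((n:ℝ)/2)*(ε^2/2))) :=
      Finset.sum_le_sum fun p _ => hbound p
    rw [Finset.sum_const] at h2
    have hcard : (Finset.univ.offDiag : Finset (Fin k × Fin k)).card = k*k - k := by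
      rw [Finset.offDiag_card, Finset.card_univ, Fintype.card_fin]
    have hr : Real.exp (-((n:ℝ)/2)*(ε^2/2)) < ((k:ℝ)*k)⁻¹ := by
      have hinv : ((k:ℝ)*k)⁻¹ = Real.exp (-(2*Real.log k)) := by
        rw [Real.exp_neg]
        congr 1
        rw [show (2:ℝ)*Real.log k = Real.log k + Real.log k by ring, Real.exp_add,
          Real.exp_log hk0]
      rw [hinv]
      apply Real.exp_lt_exp.2
      have hq := hn
      rw [gt_iff_lt, div_lt_iff₀ hε2] at hq
      nlinarith
    calc (volume : Measure (Fin n → Fin N → JLAux.GR)) bad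
        ≤ (k*k - k : ℕ) • ENNReal.ofReal (Real.exp (-((n:ℝ)/2)*(ε^2/2))) := by
          rw [← hcard]; exact h1.trans h2
      _ = ENNReal.ofReal ((k*k - k : ℕ) * Real.exp (-((n:ℝ)/2)*(ε^2/2))) := by
          rw [nsmul_eq_mul, ← ENNReal.ofReal_natCast (k*k-k), ← ENNReal.ofReal_mul
            (by positivity)]
      _ < 1 := by
          rw [← ENNReal.ofReal_one]
          apply ENNReal.ofReal_lt_ofReal_iff_of_nonneg (by positivity) |>.2
          have hkk : ((k*k - k : ℕ):ℝ) ≤ (k:ℝ)*k := by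
            calc ((k*k - k : ℕ):ℝ) ≤ ((k*k : ℕ):ℝ) := by
                  exact_mod_cast Nat.cast_le.2 (Nat.sub_le _ _)
              _ = (k:ℝ)*k := by push_cast; ring
          calc ((k*k - k : ℕ):ℝ) * Real.exp (-((n:ℝ)/2)*(ε^2/2))
              ≤ (k:ℝ)*k * Real.exp (-((n:ℝ)/2)*(ε^2/2)) :=
                mul_le_mul_of_nonneg_right hkk (Real.exp_pos _).le
            _ < (k:ℝ)*k * ((k:ℝ)*k)⁻¹ :=
                mul_lt_mul_of_pos_left hr (by positivity)
            _ = 1 := mul_inv_cancel₀ (by positivity)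
  obtain ⟨ω, hω⟩ : ∃ ω, ω ∉ bad := by
    by_contra h
    push_neg at h
    have huniv : (Set.univ : Set (Fin n → Fin N → JLAux.GR)) ⊆ bad := fun ω _ => h ω
    have : (1 : ENNReal) ≤ (volume : Measure (Fin n → Fin N → JLAux.GR)) bad := by
      calc (1 : ENNReal) = (volume : Measure (Fin n → Fin N → JLAux.GR)) Set.univ :=
            measure_univ.symm
        _ ≤ _ := measure_mono huniv
    exact absurd hbad (not_lt.2 this)
  have hnotin : ∀ p : Fin k × Fin k, p.1 ≠ p.2 → ω ∉ B p := by
    intro p hp hmem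
    exact hω (Set.mem_biUnion
      (Finset.mem_coe.2 ((Finset.mem_offDiag).2 ⟨Finset.mem_univ _, Finset.mem_univ _, hp⟩))
      hmem)
  have hXswap : ∀ i j : Fin k, JLAux.X (dir (j,i)) ω = JLAux.X (dir (i,j)) ω := by
    intro i j
    have h1 : x j - x i = -(x i - x j) := (neg_sub _ _).symm
    rw [hdir]
    show JLAux.X (JLAux.direction hN (x j - x i)) ω
        = JLAux.X (JLAux.direction hN (x i - x j)) ω
    rw [h1]
    exact JLAux.X_direction_neg hN _ ω
  have hXgood : ∀ i j : Fin k, i ≠ j →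
      (n:ℝ)*(c*(1-ε)) < JLAux.X (dir (i,j)) ω ∧
      JLAux.X (dir (i,j)) ω < (n:ℝ)*(c*(1+ε)) := by
    intro i j hij
    rcases lt_or_gt_of_ne hij with h | h
    · constructor
      · have h2 := hnotin (j,i) (fun hh => hij (hh.symm))
        rw [hB] at h2
        simp only [if_neg (not_lt.2 h.le)] at h2
        have h3 : ¬ (JLAux.X (dir (j,i)) ω ≤ (n:ℝ)*(c*(1-ε))) := h2
        rw [hXswap i j] at h3
        linarith [lt_of_not_ge h3]
      · have h2 := hnotin (i,j) (ne_of_lt h)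
        rw [hB] at h2
        simp only [if_pos h] at h2
        have h3 : ¬ ((n:ℝ)*(c*(1+ε)) ≤ JLAux.X (dir (i,j)) ω) := h2
        linarith [lt_of_not_ge h3]
    · constructor
      · have h2 := hnotin (i,j) (ne_of_gt h)
        rw [hB] at h2
        simp only [if_neg (not_lt.2 h.le)] at h2
        have h3 : ¬ (JLAux.X (dir (i,j)) ω ≤ (n:ℝ)*(c*(1-ε))) := h2
        linarith [lt_of_not_ge h3]
      · have h2 := hnotin (j,i) (fun hh => hij (hh.symm))
        rw [hB] at h2
        simp only [if_pos h] at h2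
        have h3 : ¬ ((n:ℝ)*(c*(1+ε)) ≤ JLAux.X (dir (j,i)) ω) := h2
        rw [hXswap i j] at h3
        linarith [lt_of_not_ge h3]
  set A : Fin n → Fin N → ℝ := fun r s => (ω r s).real with hA
  refine ⟨(Real.sqrt (c*n))⁻¹ • JLAux.LofM A, fun i j => ?_⟩
  by_cases hxe : x i = x j
  · refine ⟨?_, ?_⟩ <;> simp [hxe]
  · have hij : i ≠ j := fun h => hxe (congrArg x h)
    have hv0 : x i - x j ≠ 0 := sub_ne_zero.2 hxe
    have hnv : (0:ℝ) < ‖x i - x j‖ := norm_pos_iff.2 hv0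
    obtain ⟨hlow, hhigh⟩ := hXgood i j hij
    have hcn : (0:ℝ) < c * n := mul_pos hc0 hn0
    have hY : ∀ r : Fin n, JLAux.Y (dir (i,j)) (ω r)
        = ‖x i - x j‖⁻¹ * (∑ s, A r s * (x i - x j) s) := by
      intro r
      rw [JLAux.Y, Finset.mul_sum]
      refine Finset.sum_congr rfl fun s _ => ?_
      have hd : dir (i,j) s = ‖x i - x j‖⁻¹ * (x i - x j) s := by
        rw [hdir]
        show JLAux.direction hN (x i - x j) s = _
        rw [JLAux.direction, if_neg hv0]
      rw [hd, hA]
      ring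
    have hsum : ∑ r, (∑ s, A r s * (x i - x j) s)^2
        = ‖x i - x j‖^2 * JLAux.X (dir (i,j)) ω := by
      rw [JLAux.X, Finset.mul_sum]
      refine Finset.sum_congr rfl fun r _ => ?_
      rw [hY r, mul_pow]
      field_simp
    have hL : ‖((Real.sqrt (c*n))⁻¹ • JLAux.LofM A) (x i)
          - ((Real.sqrt (c*n))⁻¹ • JLAux.LofM A) (x j)‖^2
        = (c*n)⁻¹ * (‖x i - x j‖^2 * JLAux.X (dir (i,j)) ω) := by
      rw [LinearMap.smul_apply, LinearMap.smul_apply, ← smul_sub, ← map_sub, norm_smul,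
        mul_pow, Real.norm_eq_abs, sq_abs, inv_pow, Real.sq_sqrt hcn.le,
        JLAux.norm_LofM_sq, hsum]
    constructor
    · rw [hL]
      have h1 : (c*n)⁻¹ * (‖x i - x j‖^2 * ((n:ℝ)*(c*(1-ε))))
          ≤ (c*n)⁻¹ * (‖x i - x j‖^2 * JLAux.X (dir (i,j)) ω) := by
        apply mul_le_mul_of_nonneg_left _ (by positivity)
        exact mul_le_mul_of_nonneg_left hlow.le (sq_nonneg _)
      have h2 : (c*n)⁻¹ * (‖x i - x j‖^2 * ((n:ℝ)*(c*(1-ε))))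
          = (1-ε) * ‖x i - x j‖^2 := by
        field_simp
      linarith
    · rw [hL]
      have h1 : (c*n)⁻¹ * (‖x i - x j‖^2 * JLAux.X (dir (i,j)) ω)
          ≤ (c*n)⁻¹ * (‖x i - x j‖^2 * ((n:ℝ)*(c*(1+ε)))) := by
        apply mul_le_mul_of_nonneg_left _ (by positivity)
        exact mul_le_mul_of_nonneg_left hhigh.le (sq_nonneg _)
      have h2 : (c*n)⁻¹ * (‖x i - x j‖^2 * ((n:ℝ)*(c*(1+ε))))
          = (1+ε) * ‖x i - x j‖^2 := by
        field_simp
      linarith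
end JLAux
end

section
/- Let 0 < ε < 1 and let N be a positive natural number. Then for every natural number n with (n : ℝ) > 8 · log (N + 1) / ε², there exist nonzero vectors v_1, …, v_N in ℝ^n such that for all i ≠ j one has |⟨v_i, v_j⟩| / (‖v_i‖ · ‖v_j‖) ≤ 2ε/(1 − ε); that is, the vectors are pairwise (2ε/(1−ε))-almost orthogonal. -/
open scoped RealInnerProductSpace
open Finset Real

lemma chernoff_tail (n : ℕ) (b : ℝ) (hb : 0 < b) :
    ∑ k ∈ (Finset.range (n+1)).filter (fun k : ℕ => (1+b)*n ≤ 2*(k:ℝ)), (n.choose k : ℝ)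
      ≤ 2^n * Real.exp (-(b^2) * n / 2) := by
  have key : ∀ k ∈ (Finset.range (n+1)).filter (fun k : ℕ => (1+b)*n ≤ 2*(k:ℝ)),
      (n.choose k : ℝ) ≤ (n.choose k : ℝ) * Real.exp (2*b) ^ k * Real.exp (-(b*(1+b)*n)) := by
    intro k hk
    rw [Finset.mem_filter] at hk
    have h1 : (1:ℝ) ≤ Real.exp (2*b) ^ k * Real.exp (-(b*(1+b)*n)) := by
      rw [← Real.exp_nat_mul, ← Real.exp_add]
      have : (0:ℝ) ≤ k * (2*b) + -(b*(1+b)*n) := by nlinarith [hk.2]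
      calc (1:ℝ) = Real.exp 0 := by simp
        _ ≤ _ := Real.exp_le_exp.2 this
    calc (n.choose k : ℝ) = (n.choose k : ℝ) * 1 := by ring
      _ ≤ (n.choose k : ℝ) * (Real.exp (2*b) ^ k * Real.exp (-(b*(1+b)*n))) :=
          mul_le_mul_of_nonneg_left h1 (by positivity)
      _ = _ := by ring
  have hx : Real.exp b * Real.exp (-b) = 1 := by rw [← Real.exp_add]; simp
  have hx2 : Real.exp b * Real.exp b = Real.exp (2*b) := by rw [← Real.exp_add]; ring_nf
  calc ∑ k ∈ (Finset.range (n+1)).filter (fun k : ℕ => (1+b)*n ≤ 2*(k:ℝ)), (n.choose k : ℝ)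
      ≤ ∑ k ∈ (Finset.range (n+1)).filter (fun k : ℕ => (1+b)*n ≤ 2*(k:ℝ)),
          (n.choose k : ℝ) * Real.exp (2*b) ^ k * Real.exp (-(b*(1+b)*n)) :=
        Finset.sum_le_sum key
    _ ≤ ∑ k ∈ Finset.range (n+1),
          (n.choose k : ℝ) * Real.exp (2*b) ^ k * Real.exp (-(b*(1+b)*n)) := by
        apply Finset.sum_le_sum_of_subset_of_nonneg (Finset.filter_subset _ _)
        intro k _ _; positivity
    _ = (Real.exp (2*b) + 1)^n * Real.exp (-(b*(1+b)*n)) := by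
        rw [add_pow, Finset.sum_mul]
        apply Finset.sum_congr rfl
        intro k _
        rw [one_pow]
        ring
    _ ≤ (2 * Real.exp (b + b^2/2))^n * Real.exp (-(b*(1+b)*n)) := by
        apply mul_le_mul_of_nonneg_right _ (Real.exp_nonneg _)
        apply pow_le_pow_left₀ (by positivity)
        have hc : Real.cosh b ≤ Real.exp (b^2/2) := Real.cosh_le_exp_half_sq b
        rw [Real.cosh_eq] at hc
        rw [Real.exp_add]
        nlinarith [Real.exp_pos b, Real.exp_pos (b^2/2), Real.exp_pos (-b)]
    _ = 2^n * Real.exp (-(b^2) * n / 2) := by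
        rw [mul_pow, ← Real.exp_nat_mul, mul_assoc, ← Real.exp_add]
        congr 1
        ring

lemma sphere_card (n k : ℕ) (s : Fin n → Bool) :
    ((Finset.univ : Finset (Fin n → Bool)).filter
        (fun t => (Finset.univ.filter (fun i => t i ≠ s i)).card = k)).card = n.choose k := by
  have hpc : (Finset.powersetCard k (Finset.univ : Finset (Fin n))).card = n.choose k := by
    simp [Finset.card_powersetCard]
  rw [← hpc]
  apply Finset.card_bij (fun t _ => Finset.univ.filter (fun i => t i ≠ s i))
  · intro t ht
    rw [Finset.mem_filter] at ht
    rw [Finset.mem_powersetCard]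
    exact ⟨Finset.subset_univ _, ht.2⟩
  · intro t1 h1 t2 h2 heq
    funext i
    by_cases h : t1 i = s i
    · have : i ∉ Finset.univ.filter (fun j => t1 j ≠ s j) := by simp [h]
      rw [heq] at this
      simp at this
      rw [h, this]
    · have : i ∈ Finset.univ.filter (fun j => t1 j ≠ s j) := by simp [h]
      rw [heq] at this
      simp at this
      revert this h
      cases t1 i <;> cases t2 i <;> cases s i <;> simp
  · intro A hA
    rw [Finset.mem_powersetCard] at hA
    refine ⟨fun i => if i ∈ A then !(s i) else s i, ?_, ?_⟩
    · rw [Finset.mem_filter]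
      refine ⟨Finset.mem_univ _, ?_⟩
      rw [← hA.2]
      congr 1
      ext i
      by_cases h : i ∈ A <;> simp [h]
    · ext i
      by_cases h : i ∈ A <;> simp [h]

lemma bad_card (n : ℕ) (b : ℝ) (hb : 0 < b) (s : Fin n → Bool) :
    (((Finset.univ : Finset (Fin n → Bool)).filter
        (fun t => b*(n:ℝ) < |(n:ℝ) - 2*((Finset.univ.filter (fun i => t i ≠ s i)).card : ℝ)|)).card : ℝ)
      ≤ 2 * (2^n * Real.exp (-(b^2) * n / 2)) := by
  set Bad := (Finset.univ : Finset (Fin n → Bool)).filter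
      (fun t => b*(n:ℝ) < |(n:ℝ) - 2*((Finset.univ.filter (fun i => t i ≠ s i)).card : ℝ)|) with hBad
  have hd_le : ∀ t : Fin n → Bool, (Finset.univ.filter (fun i => t i ≠ s i)).card ∈ Finset.range (n+1) := by
    intro t
    rw [Finset.mem_range, Nat.lt_succ_iff]
    calc (Finset.univ.filter (fun i => t i ≠ s i)).card ≤ (Finset.univ : Finset (Fin n)).card :=
        Finset.card_le_card (Finset.filter_subset _ _)
      _ = n := by simp
  have hcard : Bad.card = ∑ k ∈ Finset.range (n+1),
      (Bad.filter (fun t => (Finset.univ.filter (fun i => t i ≠ s i)).card = k)).card :=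
    Finset.card_eq_sum_card_fiberwise (fun t _ => hd_le t)
  -- bound each fiber
  have hfiber : ∀ k ∈ Finset.range (n+1),
      ((Bad.filter (fun t => (Finset.univ.filter (fun i => t i ≠ s i)).card = k)).card : ℝ)
        ≤ if b*(n:ℝ) < |(n:ℝ) - 2*(k:ℝ)| then (n.choose k : ℝ) else 0 := by
    intro k _
    by_cases h : b*(n:ℝ) < |(n:ℝ) - 2*(k:ℝ)|
    · rw [if_pos h, ← sphere_card n k s]
      exact_mod_cast Nat.cast_le.2 (Finset.card_le_card (by
        intro t ht
        rw [Finset.mem_filter] at ht ⊢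
        exact ⟨Finset.mem_univ _, ht.2⟩))
    · rw [if_neg h]
      have hemp : Bad.filter (fun t => (Finset.univ.filter (fun i => t i ≠ s i)).card = k) = ∅ := by
        rw [Finset.filter_eq_empty_iff]
        intro t ht hk
        rw [hBad, Finset.mem_filter] at ht
        rw [hk] at ht
        exact h ht.2
      rw [hemp]
      simp
  have step1 : (Bad.card : ℝ) ≤ ∑ k ∈ Finset.range (n+1),
      (if b*(n:ℝ) < |(n:ℝ) - 2*(k:ℝ)| then (n.choose k : ℝ) else 0) := by
    rw [hcard]
    push_cast
    exact Finset.sum_le_sum hfiber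
  have step2 : ∑ k ∈ Finset.range (n+1),
      (if b*(n:ℝ) < |(n:ℝ) - 2*(k:ℝ)| then (n.choose k : ℝ) else 0)
      ≤ (∑ k ∈ (Finset.range (n+1)).filter (fun k : ℕ => (1+b)*n ≤ 2*(k:ℝ)), (n.choose k : ℝ))
        + ∑ k ∈ (Finset.range (n+1)).filter (fun k : ℕ => (1+b)*n ≤ 2*((n:ℝ)-(k:ℝ))), (n.choose k : ℝ) := by
    rw [← Finset.sum_filter]
    have hsplit : (Finset.range (n+1)).filter (fun k : ℕ => b*(n:ℝ) < |(n:ℝ) - 2*(k:ℝ)|)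
        ⊆ ((Finset.range (n+1)).filter (fun k : ℕ => (1+b)*n ≤ 2*(k:ℝ)))
          ∪ (Finset.range (n+1)).filter (fun k : ℕ => (1+b)*n ≤ 2*((n:ℝ)-(k:ℝ))) := by
      intro k hk
      rw [Finset.mem_filter] at hk
      rw [Finset.mem_union, Finset.mem_filter, Finset.mem_filter]
      rcases lt_abs.1 hk.2 with h | h
      · exact Or.inr ⟨hk.1, by linarith⟩
      · exact Or.inl ⟨hk.1, by linarith⟩
    calc ∑ k ∈ (Finset.range (n+1)).filter (fun k : ℕ => b*(n:ℝ) < |(n:ℝ) - 2*(k:ℝ)|), (n.choose k : ℝ)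
        ≤ ∑ k ∈ ((Finset.range (n+1)).filter (fun k : ℕ => (1+b)*n ≤ 2*(k:ℝ)))
            ∪ (Finset.range (n+1)).filter (fun k : ℕ => (1+b)*n ≤ 2*((n:ℝ)-(k:ℝ))), (n.choose k : ℝ) :=
          Finset.sum_le_sum_of_subset_of_nonneg hsplit (fun k _ _ => by positivity)
      _ ≤ _ := by
          have h2 := Finset.sum_union_inter (s₁ := (Finset.range (n+1)).filter (fun k : ℕ => (1+b)*n ≤ 2*(k:ℝ)))
            (s₂ := (Finset.range (n+1)).filter (fun k : ℕ => (1+b)*n ≤ 2*((n:ℝ)-(k:ℝ))))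
            (f := fun k => (n.choose k : ℝ))
          have hnn : (0:ℝ) ≤ ∑ k ∈ ((Finset.range (n+1)).filter (fun k : ℕ => (1+b)*n ≤ 2*(k:ℝ)))
              ∩ (Finset.range (n+1)).filter (fun k : ℕ => (1+b)*n ≤ 2*((n:ℝ)-(k:ℝ))), (n.choose k : ℝ) :=
            Finset.sum_nonneg (fun k _ => by positivity)
          linarith
  have reflec : ∑ k ∈ (Finset.range (n+1)).filter (fun k : ℕ => (1+b)*n ≤ 2*((n:ℝ)-(k:ℝ))), (n.choose k : ℝ)
      = ∑ k ∈ (Finset.range (n+1)).filter (fun k : ℕ => (1+b)*n ≤ 2*(k:ℝ)), (n.choose k : ℝ) := by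
    apply Finset.sum_nbij' (i := fun k => n - k) (j := fun k => n - k)
    · intro k hk
      rw [Finset.mem_filter, Finset.mem_range, Nat.lt_succ_iff] at hk ⊢
      have hkn : k ≤ n := hk.1
      refine ⟨Nat.sub_le _ _, ?_⟩
      rw [Nat.cast_sub hkn]
      exact hk.2
    · intro k hk
      rw [Finset.mem_filter, Finset.mem_range, Nat.lt_succ_iff] at hk ⊢
      have hkn : k ≤ n := hk.1
      refine ⟨Nat.sub_le _ _, ?_⟩
      rw [Nat.cast_sub hkn]
      linarith [hk.2]
    · intro k hk
      simp only [Finset.mem_filter, Finset.mem_range, Nat.lt_succ_iff] at hk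
      show n - (n - k) = k
      exact Nat.sub_sub_self hk.1
    · intro k hk
      simp only [Finset.mem_filter, Finset.mem_range, Nat.lt_succ_iff] at hk
      show n - (n - k) = k
      exact Nat.sub_sub_self hk.1
    · intro k hk
      simp only [Finset.mem_filter, Finset.mem_range, Nat.lt_succ_iff] at hk
      rw [Nat.choose_symm hk.1]
  have hch := chernoff_tail n b hb
  calc (Bad.card : ℝ) ≤ _ := step1
    _ ≤ _ := step2
    _ ≤ 2^n * Real.exp (-(b^2) * n / 2) + 2^n * Real.exp (-(b^2) * n / 2) := by
        rw [reflec]; linarith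
    _ = 2 * (2^n * Real.exp (-(b^2) * n / 2)) := by ring

lemma greedy_select {α : Type*} [Fintype α] [DecidableEq α] (R : α → α → Prop) [DecidableRel R]
    (hrefl : ∀ a, R a a) (hsymm : ∀ a b, R a b → R b a) (B : ℝ) (hB0 : (0:ℝ) ≤ B)
    (hB : ∀ a, ((Finset.univ.filter (fun x => R a x)).card : ℝ) ≤ B)
    (N : ℕ) (hc : (N:ℝ) * B < Fintype.card α) :
    ∃ v : Fin N → α, ∀ i j, i ≠ j → ¬ R (v i) (v j) := by
  have key : ∀ m : ℕ, m ≤ N → ∃ S : Finset α, S.card = m ∧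
      ∀ a ∈ S, ∀ b ∈ S, a ≠ b → ¬ R a b := by
    intro m
    induction m with
    | zero => exact fun _ => ⟨∅, by simp⟩
    | succ m ih =>
      intro hm
      obtain ⟨S, hScard, hSgood⟩ := ih (Nat.le_of_succ_le hm)
      set U := S.biUnion (fun a => Finset.univ.filter (fun x => R a x)) with hU
      have hUcard : (U.card : ℝ) < Fintype.card α := by
        calc (U.card : ℝ) ≤ ∑ a ∈ S, ((Finset.univ.filter (fun x => R a x)).card : ℝ) := by
              exact_mod_cast Nat.cast_le.2 (Finset.card_biUnion_le)
          _ ≤ ∑ a ∈ S, B := Finset.sum_le_sum (fun a _ => hB a)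
          _ = m * B := by rw [Finset.sum_const, hScard]; simp
          _ ≤ N * B := by
              apply mul_le_mul_of_nonneg_right _ hB0
              exact_mod_cast Nat.le_of_succ_le hm
          _ < _ := hc
      have hUlt : U.card < (Finset.univ : Finset α).card := by
        rw [Finset.card_univ]
        exact_mod_cast hUcard
      have hne : ((Finset.univ : Finset α) \ U).Nonempty := by
        rw [← Finset.card_pos, Finset.card_sdiff_of_subset (Finset.subset_univ _)]
        omega
      obtain ⟨x, hx⟩ := hne
      rw [Finset.mem_sdiff] at hx
      have hxU : x ∉ U := hx.2
      have hxS : x ∉ S := by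
        intro hxS
        exact hxU (Finset.mem_biUnion.2 ⟨x, hxS, Finset.mem_filter.2 ⟨Finset.mem_univ _, hrefl x⟩⟩)
      refine ⟨insert x S, ?_, ?_⟩
      · rw [Finset.card_insert_of_notMem hxS, hScard]
      · intro a ha b hb hab
        rw [Finset.mem_insert] at ha hb
        have hnR : ∀ c ∈ S, ¬ R c x := by
          intro c hc' hRcx
          exact hxU (Finset.mem_biUnion.2 ⟨c, hc', Finset.mem_filter.2 ⟨Finset.mem_univ _, hRcx⟩⟩)
        rcases ha with ha | ha <;> rcases hb with hb | hb
        · exact absurd (ha.trans hb.symm) hab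
        · subst ha
          intro hR
          exact hnR b hb (hsymm _ _ hR)
        · subst hb
          exact hnR a ha
        · exact hSgood a ha b hb hab
  obtain ⟨S, hScard, hSgood⟩ := key N le_rfl
  have e := S.equivFin
  rw [hScard] at e
  refine ⟨fun i => (e.symm i : α), ?_⟩
  intro i j hij hR
  have hne : ((e.symm i : α)) ≠ ((e.symm j : α)) := by
    intro h
    apply hij
    have : e.symm i = e.symm j := Subtype.coe_injective h
    exact e.symm.injective this
  exact hSgood _ (e.symm i).2 _ (e.symm j).2 hne hR

def chi (n : ℕ) (s : Fin n → Bool) : EuclideanSpace ℝ (Fin n) :=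
  WithLp.toLp 2 (fun i => if s i then (1:ℝ) else -1)

open scoped RealInnerProductSpace in
lemma inner_chi (n : ℕ) (s t : Fin n → Bool) :
    ⟪chi n s,
     chi n t⟫
      = (n:ℝ) - 2*((Finset.univ.filter (fun i => t i ≠ s i)).card : ℝ) := by
  rw [PiLp.inner_apply]
  have h1 : ∀ i : Fin n,
      ⟪chi n s i,
       chi n t i⟫
        = 1 - 2 * (if t i ≠ s i then (1:ℝ) else 0) := by
    intro i
    show ((if t i then (1:ℝ) else -1) * (if s i then (1:ℝ) else -1)) = _
    cases hs : s i <;> cases ht : t i <;> simp [chi, hs, ht] <;> norm_num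
  rw [Finset.sum_congr rfl (fun i _ => h1 i)]
  rw [Finset.sum_sub_distrib, Finset.sum_const, ← Finset.mul_sum, Finset.sum_boole]
  simp

lemma norm_chi (n : ℕ) (s : Fin n → Bool) :
    ‖chi n s‖ = Real.sqrt n := by
  rw [EuclideanSpace.norm_eq]
  congr 1
  have : ∀ i : Fin n, ‖chi n s i‖^2 = 1 := by
    intro i
    cases hs : s i <;> simp [chi, hs]
  rw [Finset.sum_congr rfl (fun i _ => this i)]
  simp

/-- Via the Johnson–Lindenstrauss technique, whenever `(n : ℝ) > 8 * log (N + 1) / ε ^ 2`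
there exist `N` nonzero vectors in `ℝ^n` that are pairwise `(2ε/(1-ε))`-almost orthogonal. -/
theorem exists_almost_orthogonal_of_JL_dimension_bound
    (ε : ℝ) (hε0 : 0 < ε) (hε1 : ε < 1) (N : ℕ) (hN : 0 < N)
    (n : ℕ) (hn : (n : ℝ) > 8 * Real.log (N + 1) / ε ^ 2) :
    ∃ v : Fin N → EuclideanSpace ℝ (Fin n),
      (∀ i, v i ≠ 0) ∧
      ∀ i j : Fin N, i ≠ j →
        |⟪v i, v j⟫| / (‖v i‖ * ‖v j‖) ≤ 2 * ε / (1 - ε) := by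
  classical
  have hN1 : (2:ℝ) ≤ (N:ℝ) + 1 := by
    have : (1:ℝ) ≤ (N:ℝ) := by exact_mod_cast hN
    linarith
  have hlogpos : 0 < Real.log (N+1) := Real.log_pos (by linarith)
  have hnpos : (0:ℝ) < n := lt_trans (by positivity) hn
  have hn0 : 0 < n := by exact_mod_cast hnpos
  have h1ε : (0:ℝ) < 1 - ε := by linarith
  by_cases hε3 : ε < 1/3
  · -- real construction
    set b := 2*ε with hb
    have hb0 : 0 < b := by positivity
    have hb1 : b < 1 := by rw [hb]; linarith
    set R : (Fin n → Bool) → (Fin n → Bool) → Prop :=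
      fun s t => b*(n:ℝ) < |(n:ℝ) - 2*((Finset.univ.filter (fun i => t i ≠ s i)).card : ℝ)| with hR
    have hrefl : ∀ s, R s s := by
      intro s
      rw [hR]
      simp only []
      have : (Finset.univ.filter (fun i => s i ≠ s i)) = ∅ := by
        rw [Finset.filter_eq_empty_iff]; intro i _; simp
      rw [this]
      simp only [Finset.card_empty, Nat.cast_zero, mul_zero, sub_zero]
      rw [abs_of_pos hnpos]
      nlinarith
    have hsymm : ∀ s t, R s t → R t s := by
      intro s t h
      rw [hR] at h ⊢
      have heq : (Finset.univ.filter (fun i => s i ≠ t i)) = (Finset.univ.filter (fun i => t i ≠ s i)) := by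
        apply Finset.filter_congr; intro i _; simp [ne_comm]
      show b*(n:ℝ) < |(n:ℝ) - 2*((Finset.univ.filter (fun i => s i ≠ t i)).card : ℝ)|
      rw [heq]
      exact h
    have hB : ∀ s, (((Finset.univ : Finset (Fin n → Bool)).filter (fun t => R s t)).card : ℝ)
        ≤ 2 * (2^n * Real.exp (-(b^2) * n / 2)) := fun s => bad_card n b hb0 s
    have hcardα : (Fintype.card (Fin n → Bool) : ℝ) = 2^n := by
      rw [Fintype.card_fun]
      simp
    -- numeric bound
    have hεn : 8 * Real.log (N+1) < ε^2 * n := by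
      rw [gt_iff_lt, div_lt_iff₀ (by positivity)] at hn
      linarith
    have hexp : Real.exp (-(b^2) * n / 2) < 1/(2*N) := by
      have hNpos : (0:ℝ) < (N:ℝ) := by exact_mod_cast hN
      have hlog : Real.log (2*N) < 2*ε^2*n := by
        rw [Real.log_mul (by norm_num) (ne_of_gt hNpos)]
        have h2 : Real.log 2 ≤ Real.log (N+1) := Real.log_le_log (by norm_num) (by linarith)
        have h3 : Real.log N ≤ Real.log (N+1) := Real.log_le_log hNpos (by linarith)
        nlinarith
      have : -(b^2) * n / 2 < -Real.log (2*N) := by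
        rw [hb]
        nlinarith
      calc Real.exp (-(b^2) * n / 2) < Real.exp (-Real.log (2*N)) := Real.exp_lt_exp.2 this
        _ = 1/(2*N) := by
            rw [Real.exp_neg, Real.exp_log (by positivity)]
            ring
    have hc : (N:ℝ) * (2 * (2^n * Real.exp (-(b^2) * n / 2))) < Fintype.card (Fin n → Bool) := by
      rw [hcardα]
      have hNpos : (0:ℝ) < (N:ℝ) := by exact_mod_cast hN
      have h2n : (0:ℝ) < 2^n := by positivity
      have hmul := mul_lt_mul_of_pos_left hexp hNpos
      have hN2 : (N:ℝ) * (1/(2*N)) = 1/2 := by field_simp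
      have h5 : (N:ℝ) * Real.exp (-(b^2) * n / 2) < 1/2 := by rw [hN2] at hmul; exact hmul
      nlinarith [h5, h2n]
    obtain ⟨sv, hsv⟩ := greedy_select R hrefl hsymm _ (by positivity) hB N hc
    refine ⟨fun i => chi n (sv i), ?_, ?_⟩
    · intro i h0
      have hchi := norm_chi n (sv i)
      have h0' : chi n (sv i) = 0 := h0
      rw [h0', norm_zero] at hchi
      have hs : 0 < Real.sqrt n := Real.sqrt_pos.2 hnpos
      linarith
    · intro i j hij
      have hnotR := hsv i j hij
      rw [hR] at hnotR
      push_neg at hnotR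
      rw [inner_chi, norm_chi, norm_chi]
      have hsq : Real.sqrt n * Real.sqrt n = n := Real.mul_self_sqrt (le_of_lt hnpos)
      rw [hsq]
      have h2ε : 2*ε ≤ 2*ε/(1-ε) := by
        rw [le_div_iff₀ h1ε]
        nlinarith
      calc |(n:ℝ) - 2*((Finset.univ.filter (fun i' => sv j i' ≠ sv i i')).card : ℝ)| / n
          ≤ b*n/n := by
            gcongr
        _ = b := by field_simp
        _ ≤ 2*ε/(1-ε) := by rw [hb]; exact h2ε
  · -- trivial case: 2ε/(1-ε) ≥ 1
    push_neg at hε3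
    have hge1 : (1:ℝ) ≤ 2*ε/(1-ε) := by
      rw [le_div_iff₀ h1ε]
      nlinarith
    set e : EuclideanSpace ℝ (Fin n) := EuclideanSpace.single ⟨0, hn0⟩ (1:ℝ) with he
    have hene : e ≠ 0 := by
      intro h
      have := congrFun (congrArg (fun x : EuclideanSpace ℝ (Fin n) => (x : Fin n → ℝ)) h) ⟨0, hn0⟩
      rw [he] at this
      simp [EuclideanSpace.single] at this
    refine ⟨fun _ => e, fun _ => hene, ?_⟩
    intro i j _
    have hcs : |⟪e, e⟫| ≤ ‖e‖ * ‖e‖ := abs_real_inner_le_norm e e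
    have hpos : 0 < ‖e‖ * ‖e‖ := by
      have := norm_pos_iff.2 hene
      positivity
    calc |⟪e, e⟫| / (‖e‖ * ‖e‖) ≤ 1 := by
          rw [div_le_one hpos]; exact hcs
      _ ≤ 2*ε/(1-ε) := hge1
end

section
/- The volume of the unit ball in ℝ^n, as a function of the dimension n, attains its maximum at n = 5: for every natural number n ≠ 5, π^{n/2}/Γ(n/2 + 1) < π^{5/2}/Γ(7/2); equivalently, the Lebesgue volume of the unit ball of ℝ^n is strictly smaller than the Lebesgue volume of the unit ball of ℝ^5 whenever n ≠ 5. -/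
open MeasureTheory

private noncomputable def ballVol (n : ℕ) : ℝ :=
  Real.pi ^ ((n : ℝ) / 2) / Real.Gamma ((n : ℝ) / 2 + 1)

private lemma gamma_pos (n : ℕ) : 0 < Real.Gamma ((n : ℝ) / 2 + 1) :=
  Real.Gamma_pos_of_pos (by positivity)

private lemma ballVol_pos (n : ℕ) : 0 < ballVol n := by
  unfold ballVol
  have := gamma_pos n
  positivity

private lemma ballVol_rec (n : ℕ) :
    ballVol (n + 2) = ballVol n * (Real.pi / ((n : ℝ) / 2 + 1)) := by
  unfold ballVol
  have h1 : ((n + 2 : ℕ) : ℝ) / 2 = (n : ℝ) / 2 + 1 := by push_cast; ring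
  rw [h1]
  have h2 : Real.Gamma ((n : ℝ) / 2 + 1 + 1) = ((n : ℝ) / 2 + 1) * Real.Gamma ((n : ℝ) / 2 + 1) :=
    Real.Gamma_add_one (by positivity)
  rw [h2, Real.rpow_add Real.pi_pos, Real.rpow_one]
  have h3 := (gamma_pos n).ne'
  have h4 : ((n : ℝ) / 2 + 1) ≠ 0 := by positivity
  field_simp

private lemma ballVol_zero : ballVol 0 = 1 := by
  unfold ballVol
  norm_num [Real.Gamma_one]

private lemma ballVol_one : ballVol 1 = 2 := by
  unfold ballVol
  have h : ((1 : ℕ) : ℝ) / 2 + 1 = 1 / 2 + 1 := by norm_num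
  rw [h, Real.Gamma_add_one (by norm_num), Real.Gamma_one_half_eq]
  rw [show ((1 : ℕ) : ℝ) / 2 = (1 : ℝ) / 2 by norm_num, ← Real.sqrt_eq_rpow]
  have h2 : Real.sqrt Real.pi ≠ 0 := by positivity
  field_simp

private lemma ballVol_two : ballVol 2 = Real.pi := by
  have := ballVol_rec 0
  rw [ballVol_zero] at this
  simpa using this

private lemma ballVol_three : ballVol 3 = 4 * Real.pi / 3 := by
  have := ballVol_rec 1
  rw [ballVol_one] at this
  rw [show ballVol 3 = ballVol (1 + 2) from rfl, this]
  norm_num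
  ring

private lemma ballVol_four : ballVol 4 = Real.pi ^ 2 / 2 := by
  have := ballVol_rec 2
  rw [ballVol_two] at this
  rw [show (4 : ℕ) = 2 + 2 from rfl, this]
  norm_num
  ring

private lemma ballVol_five : ballVol 5 = 8 * Real.pi ^ 2 / 15 := by
  have := ballVol_rec 3
  rw [ballVol_three] at this
  rw [show (5 : ℕ) = 3 + 2 from rfl, this]
  norm_num
  ring

private lemma ballVol_six : ballVol 6 = Real.pi ^ 3 / 6 := by
  have := ballVol_rec 4
  rw [ballVol_four] at this
  rw [show (6 : ℕ) = 4 + 2 from rfl, this]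
  norm_num
  ring

private lemma pi_gt : (3 : ℝ) < Real.pi := Real.pi_gt_three
private lemma pi_lt : Real.pi < 3.2 := by linarith [Real.pi_lt_d2]

private lemma ballVol_six_lt : ballVol 6 < ballVol 5 := by
  rw [ballVol_six, ballVol_five]
  have h3 := pi_gt
  have h4 := pi_lt
  nlinarith [sq_nonneg Real.pi, mul_lt_mul_of_pos_right pi_lt
    (by positivity : (0:ℝ) < Real.pi ^ 2)]

private lemma ballVol_seven_lt : ballVol 7 < ballVol 5 := by
  have := ballVol_rec 5
  rw [show (7 : ℕ) = 5 + 2 from rfl, this]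
  have h4 := pi_lt
  have h5 := ballVol_pos 5
  have hfac : Real.pi / ((5 : ℕ) / 2 + 1 : ℝ) < 1 := by
    rw [div_lt_one (by norm_num)]
    push_cast
    linarith
  nlinarith [Real.pi_pos]

private lemma ballVol_step_lt (n : ℕ) (hn : 5 ≤ n) : ballVol (n + 2) < ballVol n := by
  rw [ballVol_rec]
  have h5 := ballVol_pos n
  have hfac : Real.pi / ((n : ℝ) / 2 + 1) < 1 := by
    rw [div_lt_one (by positivity)]
    have : (5 : ℝ) ≤ (n : ℝ) := by exact_mod_cast hn
    linarith [pi_lt]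
  nlinarith [Real.pi_pos, (gamma_pos n)]

private lemma ballVol_big_lt (k : ℕ) :
    ballVol (2 * k + 6) < ballVol 5 ∧ ballVol (2 * k + 7) < ballVol 5 := by
  induction k with
  | zero => exact ⟨ballVol_six_lt, ballVol_seven_lt⟩
  | succ m ih =>
    constructor
    · have h := ballVol_step_lt (2 * m + 6) (by omega)
      have : 2 * (m + 1) + 6 = 2 * m + 6 + 2 := by ring
      rw [this]
      exact h.trans ih.1
    · have h := ballVol_step_lt (2 * m + 7) (by omega)
      have : 2 * (m + 1) + 7 = 2 * m + 7 + 2 := by ring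
      rw [this]
      exact h.trans ih.2

private lemma ballVol_lt_five (n : ℕ) (hn : n ≠ 5) : ballVol n < ballVol 5 := by
  have hpi := pi_gt
  have hpi2 := pi_lt
  match n, hn with
  | 0, _ => rw [ballVol_zero, ballVol_five]; nlinarith
  | 1, _ => rw [ballVol_one, ballVol_five]; nlinarith
  | 2, _ => rw [ballVol_two, ballVol_five]; nlinarith
  | 3, _ => rw [ballVol_three, ballVol_five]; nlinarith
  | 4, _ => rw [ballVol_four, ballVol_five]; nlinarith
  | (m + 6), _ =>
    rcases Nat.even_or_odd m with ⟨k, hk⟩ | ⟨k, hk⟩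
    · have := (ballVol_big_lt k).1
      rwa [show m + 6 = 2 * k + 6 by omega]
    · have := (ballVol_big_lt k).2
      rwa [show m + 6 = 2 * k + 7 by omega]

private lemma sqrt_pi_pow (n : ℕ) : Real.sqrt Real.pi ^ n = Real.pi ^ ((n : ℝ) / 2) := by
  rw [Real.sqrt_eq_rpow, ← Real.rpow_natCast (Real.pi ^ ((1 : ℝ)/2)) n,
    ← Real.rpow_mul Real.pi_pos.le]
  ring_nf

/-- The volume `π^(n/2)/Γ(n/2 + 1)` of the unit ball in `ℝ^n` is maximal exactly at `n = 5`. -/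
theorem unit_ball_volume_max_at_five (n : ℕ) (hn : n ≠ 5) :
    Real.pi ^ ((n : ℝ) / 2) / Real.Gamma ((n : ℝ) / 2 + 1)
      < Real.pi ^ ((5 : ℝ) / 2) / Real.Gamma (7 / 2) ∧
    volume (Metric.closedBall (0 : EuclideanSpace ℝ (Fin n)) 1)
      < volume (Metric.closedBall (0 : EuclideanSpace ℝ (Fin 5)) 1) := by
  have key := ballVol_lt_five n hn
  have hstmt : Real.pi ^ ((n : ℝ) / 2) / Real.Gamma ((n : ℝ) / 2 + 1)
      < Real.pi ^ ((5 : ℝ) / 2) / Real.Gamma (7 / 2) := by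
    have h5 : ((5 : ℕ) : ℝ) / 2 + 1 = (7 : ℝ) / 2 := by norm_num
    have h5' : ((5 : ℕ) : ℝ) / 2 = (5 : ℝ) / 2 := by norm_num
    unfold ballVol at key
    rwa [h5, h5'] at key
  refine ⟨hstmt, ?_⟩
  have h5pos : (0:ℝ) < ballVol 5 := ballVol_pos 5
  have hrhs : volume (Metric.closedBall (0 : EuclideanSpace ℝ (Fin 5)) 1)
      = ENNReal.ofReal (ballVol 5) := by
    rw [EuclideanSpace.volume_closedBall]
    simp only [Fintype.card_fin, ENNReal.ofReal_one, one_pow, one_mul]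
    rw [sqrt_pi_pow]
    rfl
  rcases Nat.eq_zero_or_pos n with h0 | hpos
  · subst h0
    have huniv : (Metric.closedBall (0 : EuclideanSpace ℝ (Fin 0)) 1) = Set.univ := by
      ext x; simp [Subsingleton.elim x 0]
    have hvol : volume (Set.univ : Set (EuclideanSpace ℝ (Fin 0))) = 1 := by
      have := ((EuclideanSpace.volume_preserving_symm_measurableEquiv_toLp (Fin 0)).symm
          (MeasurableEquiv.toLp 2 (Fin 0 → ℝ)).symm).measure_preimage
        (MeasurableSet.univ (α := EuclideanSpace ℝ (Fin 0))).nullMeasurableSet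
      simp only [Set.preimage_univ] at this
      rw [← this]
      simp [MeasureTheory.volume_pi, MeasureTheory.Measure.pi_univ]
    rw [huniv, hvol, hrhs]
    have h1 : (1:ℝ) < ballVol 5 := by
      rw [ballVol_five]; nlinarith [pi_gt]
    calc (1 : ENNReal) = ENNReal.ofReal 1 := (ENNReal.ofReal_one).symm
      _ < ENNReal.ofReal (ballVol 5) := (ENNReal.ofReal_lt_ofReal_iff h5pos).mpr h1
  · haveI : Nonempty (Fin n) := ⟨⟨0, hpos⟩⟩
    have hlhs : volume (Metric.closedBall (0 : EuclideanSpace ℝ (Fin n)) 1)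
        = ENNReal.ofReal (ballVol n) := by
      rw [EuclideanSpace.volume_closedBall]
      simp only [Fintype.card_fin, ENNReal.ofReal_one, one_pow, one_mul]
      rw [sqrt_pi_pow]
      rfl
    rw [hlhs, hrhs]
    exact (ENNReal.ofReal_lt_ofReal_iff h5pos).mpr key
end
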